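/- arXiv:math/9712235 — 2 statements merged into one kernel-verified Lean document; each statement's English description precedes it below -/
import Mathlib

section
/- Let e be the 'vertically up' unit vector in a real inner product space, and let v be a unit vector making angle at least ε with −e (i.e. ⟨v, −e⟩ ≤ cos ε), where 0 < μ < ε ≤ π. Let β be the unit vector obtained from v by rotating v toward e, within the 2-plane spanned by v and e, through the angle min(π/2 − μ, angle(v, e)). Then ⟨β, e⟩ ≥ sin(ε − μ). -/
open Real
open scoped RealInnerProductSpace

/-- Upwards rotation increases the vertical component: if `v` is a unit vector making
angle at least `ε` with `-e` (i.e. `⟪v, -e⟫ ≤ cos ε`), `0 < μ < ε ≤ π`, and `β` is the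
unit vector obtained from `v` by rotating toward `e` within `span {v, e}` through the
angle `min (π/2 - μ) (angle v e)` (so that the angle from `β` to `e` is
`arccos ⟪v, e⟫ - min (π/2 - μ) (arccos ⟪v, e⟫)`), then `⟪β, e⟫ ≥ sin (ε - μ)`. -/
theorem upwards_rotation_vertical_component
    {V : Type*} [NormedAddCommGroup V] [InnerProductSpace ℝ V]
    (e v β : V) (ε μ : ℝ)
    (he : ‖e‖ = 1) (hv : ‖v‖ = 1) (hβ : ‖β‖ = 1)
    (hμ0 : 0 < μ) (hμε : μ < ε) (h_eps_pi : ε ≤ π)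
    (hground : ⟪v, -e⟫ ≤ Real.cos ε)
    (hrot : ⟪β, e⟫ =
      Real.cos (Real.arccos ⟪v, e⟫ - min (π / 2 - μ) (Real.arccos ⟪v, e⟫))) :
    Real.sin (ε - μ) ≤ ⟪β, e⟫ := by
  have hsin : Real.sin (ε - μ) ≤ 1 := Real.sin_le_one _
  set θ := Real.arccos ⟪v, e⟫ with hθ
  have hθ0 : 0 ≤ θ := Real.arccos_nonneg _
  have hvE : Real.cos (π - ε) ≤ ⟪v, e⟫ := by
    have : -⟪v, e⟫ ≤ Real.cos ε := by
      simpa [inner_neg_right] using hground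
    rw [Real.cos_pi_sub]; linarith
  have hθle : θ ≤ π - ε := by
    have h1 := Real.monotone_arcsin hvE
    have h2 : Real.arccos ⟪v, e⟫ ≤ Real.arccos (Real.cos (π - ε)) := by
      rw [Real.arccos_eq_pi_div_two_sub_arcsin, Real.arccos_eq_pi_div_two_sub_arcsin]
      linarith
    rwa [Real.arccos_cos (by linarith) (by linarith)] at h2
  rw [hrot]
  rcases le_or_gt θ (π / 2 - μ) with h | h
  · rw [min_eq_right h, sub_self, Real.cos_zero]; exact hsin
  · rw [min_eq_left h.le]
    have h1 : 0 ≤ θ - (π / 2 - μ) := by linarith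
    have h2 : θ - (π / 2 - μ) ≤ π / 2 - (ε - μ) := by linarith
    calc Real.sin (ε - μ) = Real.cos (π / 2 - (ε - μ)) := (Real.cos_pi_div_two_sub _).symm
      _ ≤ Real.cos (θ - (π / 2 - μ)) := by
          apply Real.cos_le_cos_of_nonneg_of_le_pi h1 (by linarith) h2
end

section
/- Let v : K × M → S^n be a continuous family (K, M compact topological spaces) of unit vectors and suppose v(t, x) ≠ −e for all (t, x). Define β(t, x) as the upwards rotation of v(t, x) by π/2 − μ toward e (capped at e) within span{v(t,x), e}. Then β : K × M → S^n is continuous. -/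
open Real Metric
open scoped RealInnerProductSpace

section UpwardsRotationAux
variable {V : Type*} [NormedAddCommGroup V] [InnerProductSpace ℝ V]

private lemma ur_norm_w_sq (e v : V) (he : ‖e‖ = 1) (hv : ‖v‖ = 1) :
    ‖e - ⟪e, v⟫ • v‖ ^ 2 = 1 - ⟪e, v⟫ ^ 2 := by
  rw [norm_sub_sq_real, real_inner_smul_right, norm_smul, hv, he]
  simp [Real.norm_eq_abs, sq_abs]; ring

private lemma ur_w_ne (e v : V) (he : ‖e‖ = 1) (hv : ‖v‖ = 1)
    (h1 : ⟪e, v⟫ ≠ 1) (h2 : v ≠ -e) : e - ⟪e, v⟫ • v ≠ 0 := by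
  intro h
  have hw0 : ‖e - ⟪e, v⟫ • v‖ ^ 2 = 0 := by rw [h]; simp
  rw [ur_norm_w_sq e v he hv] at hw0
  have hfac : (⟪e, v⟫ - 1) * (⟪e, v⟫ + 1) = 0 := by ring_nf; linarith
  rcases mul_eq_zero.1 hfac with h' | h'
  · exact h1 (by linarith)
  · have hc : ⟪e, v⟫ = -1 := by linarith
    have he' : e = ⟪e, v⟫ • v := sub_eq_zero.1 h
    rw [hc, neg_one_smul] at he'
    exact h2 (by rw [he']; simp)

private lemma ur_norm (e v : V) (hv : ‖v‖ = 1)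
    (hw : e - ⟪e, v⟫ • v ≠ 0) (θ : ℝ) :
    ‖Real.cos θ • v + Real.sin θ • (‖e - ⟪e, v⟫ • v‖⁻¹ • (e - ⟪e, v⟫ • v))‖ = 1 := by
  set w := e - ⟪e, v⟫ • v with hwdef
  have hvw : ⟪v, w⟫ = 0 := by
    simp [hwdef, inner_sub_right, real_inner_smul_right, real_inner_comm e v,
      real_inner_self_eq_norm_sq, hv]
  have hwn : ‖w‖ ≠ 0 := norm_ne_zero_iff.2 hw
  have hu : ‖‖w‖⁻¹ • w‖ = 1 := by
    rw [norm_smul, Real.norm_eq_abs, abs_inv, abs_norm, inv_mul_cancel₀ hwn]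
  have hvu : ⟪v, ‖w‖⁻¹ • w⟫ = 0 := by rw [real_inner_smul_right, hvw, mul_zero]
  have hsq : ‖Real.cos θ • v + Real.sin θ • (‖w‖⁻¹ • w)‖ ^ 2 = 1 := by
    rw [norm_add_sq_real, real_inner_smul_left, real_inner_smul_right, hvu]
    rw [norm_smul, norm_smul, hv, hu, Real.norm_eq_abs, Real.norm_eq_abs]
    simp [sq_abs]
  nlinarith [norm_nonneg (Real.cos θ • v + Real.sin θ • (‖w‖⁻¹ • w)), hsq]

private lemma ur_boundary (e v : V) (he : ‖e‖ = 1) (hv : ‖v‖ = 1) (θ : ℝ)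
    (hsin : 0 < Real.sin θ) (hc : ⟪e, v⟫ = Real.cos θ) :
    Real.cos θ • v + Real.sin θ • (‖e - ⟪e, v⟫ • v‖⁻¹ • (e - ⟪e, v⟫ • v)) = e := by
  have hw : ‖e - ⟪e, v⟫ • v‖ = Real.sin θ := by
    have h1 := ur_norm_w_sq e v he hv
    have h2 : ‖e - ⟪e, v⟫ • v‖ ^ 2 = Real.sin θ ^ 2 := by
      rw [h1, hc]; nlinarith [Real.sin_sq_add_cos_sq θ]
    calc ‖e - ⟪e, v⟫ • v‖ = Real.sqrt (‖e - ⟪e, v⟫ • v‖ ^ 2) :=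
          (Real.sqrt_sq (norm_nonneg _)).symm
      _ = Real.sqrt (Real.sin θ ^ 2) := by rw [h2]
      _ = Real.sin θ := Real.sqrt_sq hsin.le
  rw [hw, hc, smul_smul, mul_inv_cancel₀ hsin.ne', one_smul]
  abel

end UpwardsRotationAux

/-- Upwards rotation of a unit vector `v` toward the up vector `e` by the angle
`π/2 - μ`, capped at `e`: if `angle (v, e) ≤ π/2 - μ` the result is `e`; otherwise it is
the point on the minimizing geodesic from `v` to `e` in the sphere at distance
`π/2 - μ` from `v`. -/
noncomputable def upwardsRotation {V : Type*} [NormedAddCommGroup V]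
    [InnerProductSpace ℝ V] (e : V) (μ : ℝ) (v : V) : V :=
  if Real.arccos ⟪v, e⟫ ≤ π / 2 - μ then e
  else Real.cos (π / 2 - μ) • v +
    Real.sin (π / 2 - μ) • (‖e - ⟪e, v⟫ • v‖⁻¹ • (e - ⟪e, v⟫ • v))

/-- If `v : K × M → Sⁿ` is a continuous family of unit vectors (with `K`, `M` compact)
never equal to `-e`, then the family `β` obtained by upwards rotation of each `v (t, x)`
by `π/2 - μ` toward `e` (capped at `e`) is a continuous family of unit vectors. -/
theorem upwardsRotation_family_continuous
    {n : ℕ} {K M : Type*} [TopologicalSpace K] [TopologicalSpace M]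
    [CompactSpace K] [CompactSpace M]
    (e : EuclideanSpace ℝ (Fin (n + 1))) (he : ‖e‖ = 1)
    (μ : ℝ) (hμ0 : 0 < μ) (hμ : μ < π / 2)
    (v : K × M → sphere (0 : EuclideanSpace ℝ (Fin (n + 1))) 1)
    (hv : Continuous v)
    (hground : ∀ p, (v p : EuclideanSpace ℝ (Fin (n + 1))) ≠ -e) :
    Continuous (fun p => upwardsRotation e μ (v p : EuclideanSpace ℝ (Fin (n + 1)))) ∧
      ∀ p, upwardsRotation e μ (v p : EuclideanSpace ℝ (Fin (n + 1)))
        ∈ sphere (0 : EuclideanSpace ℝ (Fin (n + 1))) 1 := by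
  set θ₀ : ℝ := π / 2 - μ with hθ₀def
  have hθ₀pos : 0 < θ₀ := by rw [hθ₀def]; linarith
  have hθ₀lt : θ₀ < π / 2 := by rw [hθ₀def]; linarith
  have hsinθ₀ : 0 < Real.sin θ₀ :=
    Real.sin_pos_of_pos_of_lt_pi hθ₀pos (hθ₀lt.trans (half_lt_self Real.pi_pos))
  have hvnorm : ∀ p, ‖(v p : EuclideanSpace ℝ (Fin (n + 1)))‖ = 1 := fun p => by
    have := (v p).2
    rwa [mem_sphere_zero_iff_norm] at this
  have hvV : Continuous (fun p => (v p : EuclideanSpace ℝ (Fin (n + 1)))) := continuous_subtype_val.comp hv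
  -- inner product family
  set c : K × M → ℝ := fun p => ⟪(v p : EuclideanSpace ℝ (Fin (n + 1))), e⟫ with hcdef
  have hcc : Continuous c := (hvV.inner continuous_const)
  have hcbound : ∀ p, |c p| ≤ 1 := fun p => by
    have := abs_real_inner_le_norm (v p : EuclideanSpace ℝ (Fin (n + 1))) e
    rwa [hvnorm p, he, one_mul] at this
  have hcsym : ∀ p, ⟪e, (v p : EuclideanSpace ℝ (Fin (n + 1)))⟫ = c p := fun p => real_inner_comm _ _
  -- the uncapped rotation formula
  set F : K × M → EuclideanSpace ℝ (Fin (n + 1)) := fun p =>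
    Real.cos θ₀ • (v p : EuclideanSpace ℝ (Fin (n + 1))) +
      Real.sin θ₀ • (‖e - ⟪e, (v p : EuclideanSpace ℝ (Fin (n + 1)))⟫ • (v p : EuclideanSpace ℝ (Fin (n + 1)))‖⁻¹ •
        (e - ⟪e, (v p : EuclideanSpace ℝ (Fin (n + 1)))⟫ • (v p : EuclideanSpace ℝ (Fin (n + 1))))) with hFdef
  have hwne : ∀ p, θ₀ ≤ Real.arccos (c p) → e - ⟪e, (v p : EuclideanSpace ℝ (Fin (n + 1)))⟫ • (v p : EuclideanSpace ℝ (Fin (n + 1))) ≠ 0 := by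
    intro p hp
    apply ur_w_ne e (v p : EuclideanSpace ℝ (Fin (n + 1))) he (hvnorm p) ?_ (hground p)
    rw [hcsym p]
    intro h1
    have : Real.arccos (c p) = 0 := by rw [h1]; exact Real.arccos_one
    linarith
  have hFcont : ∀ p, θ₀ ≤ Real.arccos (c p) → ContinuousAt F p := by
    intro p hp
    have hw : Continuous (fun q => e - ⟪e, (v q : EuclideanSpace ℝ (Fin (n + 1)))⟫ • (v q : EuclideanSpace ℝ (Fin (n + 1)))) :=
      continuous_const.sub (Continuous.smul (f := fun q => ⟪e, (v q : EuclideanSpace ℝ (Fin (n + 1)))⟫) (continuous_const.inner hvV) hvV)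
    have hnorm : ContinuousAt (fun q => ‖e - ⟪e, (v q : EuclideanSpace ℝ (Fin (n + 1)))⟫ • (v q : EuclideanSpace ℝ (Fin (n + 1)))‖⁻¹) p :=
      (hw.norm.continuousAt).inv₀ (norm_ne_zero_iff.2 (hwne p hp))
    exact (continuousAt_const.fun_smul hvV.continuousAt).add
      (continuousAt_const.fun_smul (hnorm.fun_smul hw.continuousAt))
  have hgeq : ∀ p, upwardsRotation e μ (v p : EuclideanSpace ℝ (Fin (n + 1))) =
      if Real.arccos (c p) ≤ θ₀ then e else F p := fun p => rfl
  constructor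
  · rw [continuous_iff_continuousAt]
    intro p
    rcases lt_trichotomy (Real.arccos (c p)) θ₀ with hlt | heq | hgt
    · -- strictly inside the cap: locally constant e
      have hopen : ∀ᶠ q in nhds p, Real.arccos (c q) < θ₀ :=
        ((Real.continuous_arccos.comp hcc).continuousAt).eventually_lt
          continuousAt_const hlt
      apply continuousAt_const.congr
      filter_upwards [hopen] with q hq
      rw [hgeq q, if_pos hq.le]
    · -- boundary case
      have hFp : F p = e := by
        apply ur_boundary e (v p : EuclideanSpace ℝ (Fin (n + 1))) he (hvnorm p) θ₀ hsinθ₀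
        rw [hcsym p]
        rw [← heq]
        exact (Real.cos_arccos (neg_le_of_abs_le (hcbound p))
          (le_of_abs_le (hcbound p))).symm
      have hFc : ContinuousAt F p := hFcont p heq.ge
      have hgp : upwardsRotation e μ (v p : EuclideanSpace ℝ (Fin (n + 1))) = e := by
        rw [hgeq p, if_pos heq.le]
      have hFt : Filter.Tendsto F (nhds p) (nhds e) := hFp ▸ hFc
      rw [ContinuousAt, hgp, Filter.tendsto_def]
      intro s hs
      have hes : e ∈ s := mem_of_mem_nhds hs
      have h1 : F ⁻¹' s ∈ nhds p := hFt hs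
      filter_upwards [h1] with q hq
      rw [Set.mem_preimage] at hq ⊢
      rw [hgeq q]
      split_ifs
      · exact hes
      · exact hq
    · -- strictly outside the cap: locally F
      have hopen : ∀ᶠ q in nhds p, θ₀ < Real.arccos (c q) :=
        (continuousAt_const.eventually_lt
          ((Real.continuous_arccos.comp hcc).continuousAt) hgt)
      apply (hFcont p hgt.le).congr
      filter_upwards [hopen] with q hq
      rw [hgeq q, if_neg (not_le.2 hq)]
  · intro p
    rw [mem_sphere_zero_iff_norm, hgeq p]
    split_ifs with h
    · exact he
    · exact ur_norm e (v p : EuclideanSpace ℝ (Fin (n + 1))) (hvnorm p) (hwne p (not_le.1 h).le) θ₀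
end
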